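/- arXiv:1507.04537 — 6 statements merged into one kernel-verified Lean document; each statement's English description precedes it below -/
import Mathlib

section
/- Let p, ℓ ∈ ℕ. If a family F of sets, each of cardinality ℓ, contains more than ℓ!·(p−1)^ℓ sets, then F contains a sunflower with p petals, i.e., p sets S₁,…,S_p such that S_i ∩ S_j = Y for all i ≠ j, for some fixed core Y. -/
open Finset

theorem sunflower_aux {α : Type*} [DecidableEq α] (p : ℕ) (hp : 2 ≤ p) :
    ∀ ℓ (F : Finset (Finset α)), (∀ S ∈ F, S.card = ℓ) →
    Nat.factorial ℓ * (p - 1) ^ ℓ < F.card →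
    ∃ P ⊆ F, P.card = p ∧ ∃ Y : Finset α,
      ∀ S ∈ P, ∀ T ∈ P, S ≠ T → S ∩ T = Y := by
  intro ℓ
  induction ℓ with
  | zero =>
    intro F hcard hbig
    exfalso
    have hsub : F ⊆ {∅} := fun S hS => by
      simp [Finset.card_eq_zero.mp (hcard S hS)]
    have := Finset.card_le_card hsub
    simp [Nat.factorial] at hbig this
    omega
  | succ n ih =>
    intro F hcard hbig
    classical
    set 𝒟 := F.powerset.filter
      (fun D => ∀ S ∈ D, ∀ T ∈ D, S ≠ T → S ∩ T = ∅) with h𝒟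
    have hne : 𝒟.Nonempty := ⟨∅, by simp [h𝒟]⟩
    obtain ⟨D, hD, hDmax⟩ := 𝒟.exists_max_image Finset.card hne
    have hDF : D ⊆ F := Finset.mem_powerset.mp (Finset.mem_filter.mp hD).1
    have hDdisj := (Finset.mem_filter.mp hD).2
    by_cases hcase : p ≤ D.card
    · obtain ⟨P, hPD, hPcard⟩ := Finset.exists_subset_card_eq hcase
      exact ⟨P, hPD.trans hDF, hPcard, ∅,
        fun S hS T hT hST => hDdisj S (hPD hS) T (hPD hT) hST⟩
    · push_neg at hcase
      set X := D.sup id with hX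
      have hmeet : ∀ S ∈ F, (S ∩ X).Nonempty := by
        intro S hS
        by_contra hcon
        rw [Finset.not_nonempty_iff_eq_empty] at hcon
        have hSD : S ∉ D := by
          intro hSD
          have hsub : S ⊆ X := Finset.le_sup (f := id) hSD
          have hSe : S ∩ X = S := Finset.inter_eq_left.mpr hsub
          rw [hSe] at hcon
          have := hcard S hS
          simp [hcon] at this
        have hins : insert S D ∈ 𝒟 := by
          rw [h𝒟, Finset.mem_filter, Finset.mem_powerset]
          refine ⟨Finset.insert_subset hS hDF, ?_⟩
          intro A hA B hB hAB
          rcases Finset.mem_insert.mp hA with rfl | hA'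
          · rcases Finset.mem_insert.mp hB with rfl | hB'
            · exact absurd rfl hAB
            · have hBX : B ⊆ X := Finset.le_sup (f := id) hB'
              exact Finset.subset_empty.mp
                (hcon ▸ Finset.inter_subset_inter_left hBX)
          · rcases Finset.mem_insert.mp hB with rfl | hB'
            · have hAX : A ⊆ X := Finset.le_sup (f := id) hA'
              rw [Finset.inter_comm]
              exact Finset.subset_empty.mp
                (hcon ▸ Finset.inter_subset_inter_left hAX)
            · exact hDdisj A hA' B hB' hAB
        have := hDmax _ hins
        have hSD' : (insert S D).card = D.card + 1 := Finset.card_insert_of_notMem hSD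
        omega
      have hXcard : X.card ≤ (p - 1) * (n + 1) := by
        have h1 : X = D.biUnion id := Finset.sup_eq_biUnion D id
        have h2 : (D.biUnion id).card ≤ ∑ S ∈ D, S.card := by
          have := Finset.card_biUnion_le (s := D) (t := id)
          simpa using this
        have h3 : ∑ S ∈ D, S.card = D.card * (n + 1) := by
          rw [Finset.sum_congr rfl (fun S hS => hcard S (hDF hS))]
          simp [mul_comm]
        rw [h1]
        calc (D.biUnion id).card ≤ D.card * (n+1) := by omega
          _ ≤ (p - 1) * (n + 1) := by
            apply Nat.mul_le_mul_right; omega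
      have hsum : F.card ≤ ∑ x ∈ X, (F.filter (fun S => x ∈ S)).card := by
        have hsub : F ⊆ X.biUnion (fun x => F.filter (fun S => x ∈ S)) := by
          intro S hS
          obtain ⟨x, hx⟩ := hmeet S hS
          rw [Finset.mem_inter] at hx
          exact Finset.mem_biUnion.mpr ⟨x, hx.2, Finset.mem_filter.mpr ⟨hS, hx.1⟩⟩
        calc F.card ≤ (X.biUnion (fun x => F.filter (fun S => x ∈ S))).card :=
              Finset.card_le_card hsub
          _ ≤ ∑ x ∈ X, (F.filter (fun S => x ∈ S)).card := Finset.card_biUnion_le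
      have hkey : ∃ x ∈ X, Nat.factorial n * (p - 1) ^ n <
          (F.filter (fun S => x ∈ S)).card := by
        by_contra hcon
        push_neg at hcon
        have : ∑ x ∈ X, (F.filter (fun S => x ∈ S)).card ≤
            X.card * (Nat.factorial n * (p - 1) ^ n) := by
          calc ∑ x ∈ X, (F.filter (fun S => x ∈ S)).card
              ≤ ∑ _x ∈ X, (Nat.factorial n * (p - 1) ^ n) :=
                Finset.sum_le_sum hcon
            _ = X.card * (Nat.factorial n * (p - 1) ^ n) := by
                simp [mul_comm]
        have hb : Nat.factorial (n + 1) * (p - 1) ^ (n + 1) =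
            ((p - 1) * (n + 1)) * (Nat.factorial n * (p - 1) ^ n) := by
          rw [Nat.factorial_succ, pow_succ]
          ring
        have : F.card ≤ ((p - 1) * (n + 1)) * (Nat.factorial n * (p - 1) ^ n) := by
          calc F.card ≤ X.card * (Nat.factorial n * (p - 1) ^ n) := le_trans hsum this
            _ ≤ ((p - 1) * (n + 1)) * (Nat.factorial n * (p - 1) ^ n) :=
              Nat.mul_le_mul_right _ hXcard
        omega
      obtain ⟨x, _hxX, hx⟩ := hkey
      set F₁ := F.filter (fun S => x ∈ S) with hF₁
      have hxF₁ : ∀ S ∈ F₁, x ∈ S := fun S hS => (Finset.mem_filter.mp hS).2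
      have hF₁F : F₁ ⊆ F := Finset.filter_subset _ _
      set F' := F₁.image (fun S => S.erase x) with hF'
      have hinj : Set.InjOn (fun S : Finset α => S.erase x) ↑F₁ := by
        intro S hS T hT h
        have h' : S.erase x = T.erase x := h
        rw [← Finset.insert_erase (hxF₁ S hS), ← Finset.insert_erase (hxF₁ T hT), h']
      have hF'card : Nat.factorial n * (p - 1) ^ n < F'.card := by
        rw [hF', Finset.card_image_of_injOn hinj]
        exact hx
      have hcard' : ∀ S' ∈ F', S'.card = n := by
        intro S' hS'
        obtain ⟨S, hS, rfl⟩ := Finset.mem_image.mp hS'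
        rw [Finset.card_erase_of_mem (hxF₁ S hS), hcard S (hF₁F hS)]
        omega
      obtain ⟨P', hP'F', hP'card, Y', hY'⟩ := ih F' hcard' hF'card
      have hxP' : ∀ S' ∈ P', x ∉ S' := by
        intro S' hS'
        obtain ⟨S, _hS, rfl⟩ := Finset.mem_image.mp (hP'F' hS')
        exact Finset.notMem_erase x S
      refine ⟨P'.image (insert x), ?_, ?_, insert x Y', ?_⟩
      · intro T hT
        obtain ⟨S', hS', rfl⟩ := Finset.mem_image.mp hT
        obtain ⟨S, hS, rfl⟩ := Finset.mem_image.mp (hP'F' hS')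
        rw [Finset.insert_erase (hxF₁ S hS)]
        exact hF₁F hS
      · rw [Finset.card_image_of_injOn, hP'card]
        intro S' hS' T' hT' h
        rw [← Finset.erase_insert (hxP' S' hS'), ← Finset.erase_insert (hxP' T' hT'), h]
      · intro S hS T hT hST
        obtain ⟨S', hS', rfl⟩ := Finset.mem_image.mp hS
        obtain ⟨T', hT', rfl⟩ := Finset.mem_image.mp hT
        have hne' : S' ≠ T' := fun h => hST (by rw [h])
        rw [← Finset.insert_inter_distrib, hY' S' hS' T' hT' hne']

/-- **Sunflower Lemma** (Erdős–Rado). If a family `F` of sets, each of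
cardinality `ℓ`, contains more than `ℓ! * (p-1)^ℓ` sets, then `F` contains a
sunflower with `p` petals: `p` sets whose pairwise intersections all equal a
fixed core `Y`. -/
theorem sunflower_lemma {α : Type*} [DecidableEq α] (p ℓ : ℕ)
    (F : Finset (Finset α)) (hcard : ∀ S ∈ F, S.card = ℓ)
    (hbig : Nat.factorial ℓ * (p - 1) ^ ℓ < F.card) :
    ∃ P ⊆ F, P.card = p ∧ ∃ Y : Finset α,
      ∀ S ∈ P, ∀ T ∈ P, S ≠ T → S ∩ T = Y := by
  match p with
  | 0 => exact ⟨∅, Finset.empty_subset _, rfl, ∅, by simp⟩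
  | 1 =>
    have hne : F.Nonempty := Finset.card_pos.mp (by omega)
    obtain ⟨S, hS⟩ := hne
    refine ⟨{S}, Finset.singleton_subset_iff.mpr hS, rfl, ∅, ?_⟩
    intro A hA B hB hAB
    simp only [Finset.mem_singleton] at hA hB
    exact absurd (hA.trans hB.symm) hAB
  | (m + 2) => exact sunflower_aux (m + 2) (by omega) ℓ F hcard hbig
end

section
/- Let ℓ, p ∈ ℕ and let R be a set of ℓ-tuples over some domain. If R contains more than ℓ^ℓ · p^ℓ · (ℓ!)² tuples, then R contains a sunflower of tuples with p petals. -/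
open Finset

open scoped Classical in
/-- Core sunflower lemma for families of tuples that are injective on a fixed
set `K` of positions and determined by their values on `K`. -/
private lemma core_lemma {α : Type*} {ℓ : ℕ} (p : ℕ) (hp : 0 < p) :
    ∀ (k : ℕ) (K : Finset (Fin ℓ)) (F : Finset (Fin ℓ → α)),
      K.card = k →
      (∀ t ∈ F, ∀ i ∈ K, ∀ j ∈ K, t i = t j → i = j) →
      (∀ t ∈ F, ∀ t' ∈ F, (∀ i ∈ K, t i = t' i) → t = t') →
      p ^ k * (Nat.factorial k) ^ 2 < F.card →
      ∃ H ⊆ F, H.card = p ∧ ∃ J ⊆ K,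
        (∀ j ∈ J, ∀ t ∈ H, ∀ t' ∈ H, t j = t' j) ∧
        (∀ t ∈ H, ∀ t' ∈ H, t ≠ t' →
          ∀ i ∈ K, i ∉ J → ∀ i' ∈ K, i' ∉ J → t i ≠ t' i') := by
  classical
  intro k
  induction k with
  | zero =>
    intro K F hK hinj hdet hbig
    exfalso
    have hK0 : K = ∅ := card_eq_zero.mp hK
    have h1 : F.card ≤ 1 :=
      card_le_one.mpr (fun t ht t' ht' => hdet t ht t' ht' (by simp [hK0]))
    simp [Nat.factorial] at hbig
    omega
  | succ k ih =>
    intro K F hK hinj hdet hbig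
    by_cases hdisj : ∃ H ⊆ F, H.card = p ∧
        ∀ t ∈ H, ∀ t' ∈ H, t ≠ t' → ∀ i ∈ K, ∀ i' ∈ K, t i ≠ t' i'
    · obtain ⟨H, hHF, hHcard, hH⟩ := hdisj
      exact ⟨H, hHF, hHcard, ∅, empty_subset _, by simp,
        fun t ht t' ht' htt i hi _ i' hi' _ => hH t ht t' ht' htt i hi i' hi'⟩
    · -- take a maximal pairwise "K-disjoint" subfamily D
      set S : Finset (Finset (Fin ℓ → α)) :=
        F.powerset.filter (fun D => ∀ t ∈ D, ∀ t' ∈ D, t ≠ t' →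
          ∀ i ∈ K, ∀ i' ∈ K, t i ≠ t' i') with hS
      have hSne : S.Nonempty := ⟨∅, by simp [hS]⟩
      obtain ⟨D, hDS, hDmax⟩ := S.exists_max_image card hSne
      have hDF : D ⊆ F := mem_powerset.mp (mem_filter.mp hDS).1
      have hDdisj := (mem_filter.mp hDS).2
      have hDlt : D.card < p := by
        by_contra hle
        push_neg at hle
        obtain ⟨H, hHD, hHcard⟩ := exists_subset_card_eq hle
        exact hdisj ⟨H, hHD.trans hDF, hHcard,
          fun t ht t' ht' => hDdisj t (hHD ht) t' (hHD ht')⟩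
      have hKne : K.Nonempty := card_pos.mp (by omega)
      set U : Finset α := D.biUnion (fun d => K.image d) with hU
      -- every member of F hits U at some position in K
      have hhit : ∀ t ∈ F, ∃ b ∈ K ×ˢ U, t b.1 = b.2 := by
        intro t htF
        by_contra hcon
        push_neg at hcon
        have hsep : ∀ d ∈ D, ∀ i ∈ K, ∀ i' ∈ K, t i ≠ d i' := by
          intro d hd i hi i' hi' he
          exact hcon (i, d i')
            (mem_product.mpr ⟨hi, mem_biUnion.mpr ⟨d, hd, mem_image.mpr ⟨i', hi', rfl⟩⟩⟩) he
        have htD : t ∉ D := by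
          intro htD
          obtain ⟨i, hi⟩ := hKne
          exact hsep t htD i hi i hi rfl
        have hins : insert t D ∈ S := by
          refine mem_filter.mpr ⟨mem_powerset.mpr (insert_subset htF hDF), ?_⟩
          intro x hx y hy hxy i hi i' hi' he
          rcases mem_insert.mp hx with hx' | hx' <;> rcases mem_insert.mp hy with hy' | hy'
          · exact hxy (hx'.trans hy'.symm)
          · subst hx'; exact hsep y hy' i hi i' hi' he
          · subst hy'; exact hsep x hx' i' hi' i hi he.symm
          · exact hDdisj x hx' y hy' hxy i hi i' hi' he
        have := hDmax _ hins
        rw [card_insert_of_notMem htD] at this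
        omega
      have hUcard : U.card ≤ D.card * (k + 1) := by
        apply card_biUnion_le_card_mul
        intro d _
        exact card_image_le.trans (le_of_eq hK)
      have hPcard : (K ×ˢ U).card ≤ (k + 1) * ((p - 1) * (k + 1)) := by
        rw [card_product, hK]
        exact Nat.mul_le_mul_left _ (hUcard.trans (Nat.mul_le_mul_right _ (by omega)))
      -- choice of hitting pair
      have hFne : F.Nonempty := card_pos.mp (lt_of_le_of_lt (Nat.zero_le _) hbig)
      obtain ⟨t0, ht0⟩ := hFne
      obtain ⟨i0, hi0⟩ := hKne
      set g : (Fin ℓ → α) → Fin ℓ × α := fun t =>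
        if h : ∃ b ∈ K ×ˢ U, t b.1 = b.2 then h.choose else (i0, t0 i0) with hg
      have hgmem : ∀ t ∈ F, g t ∈ K ×ˢ U ∧ t (g t).1 = (g t).2 := by
        intro t ht
        have h := hhit t ht
        rw [hg]
        simp only [dif_pos h]
        exact ⟨h.choose_spec.1, h.choose_spec.2⟩
      -- counting
      obtain ⟨q, rfl⟩ : ∃ q, p = q + 1 := ⟨p - 1, (Nat.succ_pred_eq_of_pos hp).symm⟩
      have key : ((k + 1) * (((q+1) - 1) * (k + 1))) * ((q+1) ^ k * (Nat.factorial k) ^ 2)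
          < (q+1) ^ (k + 1) * (Nat.factorial (k + 1)) ^ 2 := by
        have h1 : (q+1) ^ (k + 1) * (Nat.factorial (k + 1)) ^ 2
            = (q + 1) * (k + 1) * (k + 1) * ((q+1) ^ k * (Nat.factorial k) ^ 2) := by
          rw [Nat.factorial_succ]
          ring
        rw [h1]
        have hM : 0 < (q+1) ^ k * (Nat.factorial k) ^ 2 := by positivity
        have hq : (q+1) - 1 = q := by omega
        rw [hq]
        have : q * (k+1) * (k+1) < (q+1) * (k+1) * (k+1) := by
          have hk1 : 0 < (k+1) * (k+1) := by positivity
          calc q * (k+1) * (k+1) = q * ((k+1)*(k+1)) := by ring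
            _ < (q+1) * ((k+1)*(k+1)) := by
                exact (Nat.mul_lt_mul_right hk1).mpr (Nat.lt_succ_self q)
            _ = (q+1) * (k+1) * (k+1) := by ring
        calc (k + 1) * (q * (k + 1)) * ((q+1) ^ k * (Nat.factorial k) ^ 2)
            = (q * (k+1) * (k+1)) * ((q+1) ^ k * (Nat.factorial k) ^ 2) := by ring
          _ < ((q+1) * (k+1) * (k+1)) * ((q+1) ^ k * (Nat.factorial k) ^ 2) :=
              (Nat.mul_lt_mul_right hM).mpr this
      have hn : (K ×ˢ U).card * ((q+1) ^ k * (Nat.factorial k) ^ 2) < F.card :=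
        lt_of_le_of_lt (Nat.mul_le_mul_right _ hPcard) (lt_trans key hbig)
      obtain ⟨b, hbP, hbfib⟩ :=
        exists_lt_card_fiber_of_mul_lt_card_of_maps_to (fun t ht => (hgmem t ht).1) hn
      -- the big fiber
      set F' : Finset (Fin ℓ → α) := F.filter (fun t => t b.1 = b.2) with hF'
      have hsub : F.filter (fun t => g t = b) ⊆ F' := by
        intro t ht
        rw [mem_filter] at ht ⊢
        refine ⟨ht.1, ?_⟩
        have := (hgmem t ht.1).2
        rw [ht.2] at this
        exact this
      have hF'big : (q+1) ^ k * (Nat.factorial k) ^ 2 < F'.card :=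
        lt_of_lt_of_le hbfib (card_le_card hsub)
      have hb1K : b.1 ∈ K := (mem_product.mp hbP).1
      have hKerase : (K.erase b.1).card = k := by
        rw [card_erase_of_mem hb1K, hK]
        omega
      have hinj' : ∀ t ∈ F', ∀ i ∈ K.erase b.1, ∀ j ∈ K.erase b.1, t i = t j → i = j :=
        fun t ht i hi j hj =>
          hinj t (filter_subset _ _ ht) i (mem_of_mem_erase hi) j (mem_of_mem_erase hj)
      have hdet' : ∀ t ∈ F', ∀ t' ∈ F', (∀ i ∈ K.erase b.1, t i = t' i) → t = t' := by
        intro t ht t' ht' hag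
        refine hdet t (filter_subset _ _ ht) t' (filter_subset _ _ ht') ?_
        intro i hi
        by_cases hib : i = b.1
        · subst hib
          rw [(mem_filter.mp ht).2, (mem_filter.mp ht').2]
        · exact hag i (mem_erase.mpr ⟨hib, hi⟩)
      obtain ⟨H, hHF', hHcard, J', hJ'sub, hagree, hdisj2⟩ :=
        ih (K.erase b.1) F' hKerase hinj' hdet' hF'big
      refine ⟨H, hHF'.trans (filter_subset _ _), hHcard, insert b.1 J',
        insert_subset hb1K (hJ'sub.trans (erase_subset _ _)), ?_, ?_⟩
      · intro j hj t ht t' ht'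
        rcases mem_insert.mp hj with rfl | hj'
        · rw [(mem_filter.mp (hHF' ht)).2, (mem_filter.mp (hHF' ht')).2]
        · exact hagree j hj' t ht t' ht'
      · intro t ht t' ht' htt i hiK hiJ i' hi'K hi'J
        have h1 : i ∈ K.erase b.1 :=
          mem_erase.mpr ⟨fun h => hiJ (h ▸ mem_insert_self _ _), hiK⟩
        have h2 : i' ∈ K.erase b.1 :=
          mem_erase.mpr ⟨fun h => hi'J (h ▸ mem_insert_self _ _), hi'K⟩
        exact hdisj2 t ht t' ht' htt i h1 (fun h => hiJ (mem_insert_of_mem h))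
          i' h2 (fun h => hi'J (mem_insert_of_mem h))

open scoped Classical in
/-- Fingerprint (equality type) of a tuple: `fp t i` is the least position `j`
with `t j = t i`. -/
private noncomputable def fp {α : Type*} {ℓ : ℕ} (t : Fin ℓ → α) (i : Fin ℓ) : Fin ℓ :=
  (Finset.univ.filter (fun j => t j = t i)).min' ⟨i, by simp⟩

open scoped Classical in
private lemma fp_spec {α : Type*} {ℓ : ℕ} (t : Fin ℓ → α) (i : Fin ℓ) : t (fp t i) = t i :=
  (Finset.mem_filter.mp
    ((Finset.univ.filter (fun j => t j = t i)).min'_mem ⟨i, by simp⟩)).2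

open scoped Classical in
private lemma fp_eq_of_eq {α : Type*} {ℓ : ℕ} {t : Fin ℓ → α} {i j : Fin ℓ}
    (h : t i = t j) : fp t i = fp t j := by
  have hset : (Finset.univ.filter (fun j' => t j' = t i))
      = (Finset.univ.filter (fun j' => t j' = t j)) := by
    ext x
    simp [h]
  unfold fp
  simp only [hset]

private lemma fp_iff {α : Type*} {ℓ : ℕ} (t : Fin ℓ → α) (i j : Fin ℓ) :
    t i = t j ↔ fp t i = fp t j :=
  ⟨fp_eq_of_eq, fun h => by rw [← fp_spec t i, h]; exact fp_spec t j⟩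

private lemma fp_idem {α : Type*} {ℓ : ℕ} (t : Fin ℓ → α) (i : Fin ℓ) :
    fp t (fp t i) = fp t i :=
  fp_eq_of_eq (fp_spec t i)

/-- **Sunflower Lemma for tuples.** If a set `R` of `ℓ`-tuples contains more
than `ℓ^ℓ * p^ℓ * (ℓ!)²` tuples, then `R` contains a sunflower of tuples with
`p` petals: a subset `H` of size `p` such that (i) all tuples in `H` have the
same equality type, (ii) there is a set `J` of positions on which all tuples of
`H` agree, and (iii) outside of `J`, distinct tuples of `H` use disjoint sets of
elements. -/
theorem sunflower_lemma_tuples {α : Type*} (ℓ p : ℕ)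
    (R : Finset (Fin ℓ → α))
    (hbig : ℓ ^ ℓ * p ^ ℓ * (Nat.factorial ℓ) ^ 2 < R.card) :
    ∃ H ⊆ R, H.card = p ∧
      (∀ t ∈ H, ∀ t' ∈ H, ∀ i j : Fin ℓ, (t i = t j ↔ t' i = t' j)) ∧
      ∃ J : Finset (Fin ℓ),
        (∀ j ∈ J, ∀ t ∈ H, ∀ t' ∈ H, t j = t' j) ∧
        (∀ t ∈ H, ∀ t' ∈ H, t ≠ t' →
          ∀ i ∉ J, ∀ i' ∉ J, t i ≠ t' i') := by
  classical
  rcases Nat.eq_zero_or_pos p with rfl | hp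
  · exact ⟨∅, empty_subset _, card_empty, by simp, ∅, by simp, by simp⟩
  -- pigeonhole over fingerprints
  have hmaps : ∀ t ∈ R, fp t ∈ (univ : Finset (Fin ℓ → Fin ℓ)) := fun _ _ => mem_univ _
  have hlt : (univ : Finset (Fin ℓ → Fin ℓ)).card * (p ^ ℓ * (Nat.factorial ℓ) ^ 2)
      < R.card := by
    rw [card_univ]
    have : Fintype.card (Fin ℓ → Fin ℓ) = ℓ ^ ℓ := by
      simp [Fintype.card_fun]
    rw [this, ← mul_assoc]
    exact hbig
  obtain ⟨f, -, hf⟩ := exists_lt_card_fiber_of_mul_lt_card_of_maps_to hmaps hlt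
  set F0 : Finset (Fin ℓ → α) := R.filter (fun t => fp t = f) with hF0def
  have hfp : ∀ t ∈ F0, fp t = f := fun t ht => (mem_filter.mp ht).2
  have hF0ne : F0.Nonempty := card_pos.mp (lt_of_le_of_lt (Nat.zero_le _) hf)
  obtain ⟨t1, ht1⟩ := hF0ne
  set K : Finset (Fin ℓ) := univ.image f with hKdef
  have hfK : ∀ i, f i ∈ K := fun i => mem_image_of_mem f (mem_univ i)
  have hKfix : ∀ i ∈ K, f i = i := by
    intro i hi
    obtain ⟨j, -, rfl⟩ := mem_image.mp hi
    have h := fp_idem t1 j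
    rw [hfp t1 ht1] at h
    exact h
  have hval : ∀ t ∈ F0, ∀ i, t (f i) = t i := by
    intro t ht i
    rw [← hfp t ht]
    exact fp_spec t i
  have hiff : ∀ t ∈ F0, ∀ i j, t i = t j ↔ f i = f j := by
    intro t ht i j
    rw [← hfp t ht]
    exact fp_iff t i j
  have hKcard : K.card ≤ ℓ := le_trans card_image_le (by simp)
  have hsmall : p ^ K.card * (Nat.factorial K.card) ^ 2 ≤ p ^ ℓ * (Nat.factorial ℓ) ^ 2 :=
    Nat.mul_le_mul (Nat.pow_le_pow_right hp hKcard)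
      (Nat.pow_le_pow_left (Nat.factorial_le hKcard) 2)
  obtain ⟨H, hHF0, hHcard, J, hJK, hagree, hdisj⟩ :=
    core_lemma p hp K.card K F0 rfl
      (fun t ht i hi j hj hij => by
        have h := (hiff t ht i j).mp hij
        rw [hKfix i hi, hKfix j hj] at h
        exact h)
      (fun t ht t' ht' hag => funext fun i => by
        rw [← hval t ht i, ← hval t' ht' i]
        exact hag (f i) (hfK i))
      (lt_of_le_of_lt hsmall hf)
  refine ⟨H, hHF0.trans (filter_subset _ _), hHcard, ?_,
    univ.filter (fun i => f i ∈ J), ?_, ?_⟩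
  · intro t ht t' ht' i j
    rw [hiff t (hHF0 ht), hiff t' (hHF0 ht')]
  · intro j hj t ht t' ht'
    have hfj : f j ∈ J := (mem_filter.mp hj).2
    rw [← hval t (hHF0 ht) j, ← hval t' (hHF0 ht') j]
    exact hagree (f j) hfj t ht t' ht'
  · intro t ht t' ht' htt i hi i' hi'
    have h1 : f i ∉ J := fun h => hi (mem_filter.mpr ⟨mem_univ _, h⟩)
    have h2 : f i' ∉ J := fun h => hi' (mem_filter.mpr ⟨mem_univ _, h⟩)
    rw [← hval t (hHF0 ht) i, ← hval t' (hHF0 ht') i']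
    exact hdisj t ht t' ht' htt (f i) (hfK i) h1 (f i') (hfK i') h2
end

section
/- Let P be a dynamic program (transition system on states, where each modification δ induces a deterministic state transition). Suppose every state reachable from the initial state via insertion-only sequences is locally history independent: (H1) insertions commute, i.e., applying insertions δ₁δ₂ and δ₂δ₁ yield the same state; (H2) if tuple a is not in relation R of the state, then applying ins_R(a) followed by del_R(a) returns the same state; (H3) applying ins_R(a) when a is already in R, or del_R(a) when a is not in R, leaves the state unchanged. Then for any two modification sequences α₁, α₂ from the empty initial database that yield the same input database, the resulting states are equal (P is history independent). -/
/-- A database over a relational schema: each relation symbol `R` (of arity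
`ar R`) is assigned a relation over the domain `D`. -/
def Database (ρ : Type*) (ar : ρ → ℕ) (D : Type*) :=
  (R : ρ) → Set (Fin (ar R) → D)

/-- A modification: insertion or deletion of a tuple into/from a relation. -/
inductive Modification (ρ : Type*) (ar : ρ → ℕ) (D : Type*) where
  | ins (R : ρ) (a : Fin (ar R) → D)
  | del (R : ρ) (a : Fin (ar R) → D)

/-- Applying a single modification to a database. -/
def applyMod {ρ : Type*} [DecidableEq ρ] {ar : ρ → ℕ} {D : Type*}
    (δ : Modification ρ ar D) (db : Database ρ ar D) : Database ρ ar D :=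
  match δ with
  | .ins R a => Function.update db R (insert a (db R))
  | .del R a => Function.update db R (db R \ {a})

/-- Applying a sequence of modifications (left to right). -/
def applySeq {ρ : Type*} [DecidableEq ρ] {ar : ρ → ℕ} {D : Type*}
    (α : List (Modification ρ ar D)) (db : Database ρ ar D) : Database ρ ar D :=
  α.foldl (fun d δ => applyMod δ d) db

/-- The empty database. -/
def emptyDb {ρ : Type*} {ar : ρ → ℕ} {D : Type*} : Database ρ ar D :=
  fun _ => ∅

/-- A dynamic program: a deterministic transition system on states `S`, where
each state carries an input database (`inp`), each modification induces a
deterministic state transition updating the input database with set semantics,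
and the initial state has empty input database. -/
structure DynProgram (ρ : Type*) [DecidableEq ρ] (ar : ρ → ℕ) (D : Type*)
    (S : Type*) where
  inp : S → Database ρ ar D
  step : Modification ρ ar D → S → S
  init : S
  inp_init : inp init = emptyDb
  inp_step : ∀ δ s, inp (step δ s) = applyMod δ (inp s)

/-- Applying a modification sequence to a state of a dynamic program. -/
def DynProgram.stepSeq {ρ : Type*} [DecidableEq ρ] {ar : ρ → ℕ} {D S : Type*}
    (P : DynProgram ρ ar D S) (α : List (Modification ρ ar D)) (s : S) : S :=
  α.foldl (fun t δ => P.step δ t) s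

/-- A modification is an insertion. -/
def Modification.IsInsertion {ρ : Type*} {ar : ρ → ℕ} {D : Type*}
    (δ : Modification ρ ar D) : Prop :=
  ∃ (R : ρ) (a : Fin (ar R) → D), δ = .ins R a

/-- A state is locally history independent: (H1) insertions commute, (H2)
inserting an absent tuple and then deleting it returns the same state, (H3)
inserting a present tuple or deleting an absent tuple leaves the state
unchanged. -/
def LocallyHI {ρ : Type*} [DecidableEq ρ] {ar : ρ → ℕ} {D S : Type*}
    (P : DynProgram ρ ar D S) (s : S) : Prop :=
  (∀ δ₁ δ₂ : Modification ρ ar D, δ₁.IsInsertion → δ₂.IsInsertion →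
      P.step δ₂ (P.step δ₁ s) = P.step δ₁ (P.step δ₂ s)) ∧
  (∀ (R : ρ) (a : Fin (ar R) → D), a ∉ P.inp s R →
      P.step (.del R a) (P.step (.ins R a) s) = s) ∧
  (∀ (R : ρ) (a : Fin (ar R) → D),
      (a ∈ P.inp s R → P.step (.ins R a) s = s) ∧
      (a ∉ P.inp s R → P.step (.del R a) s = s))

/-!
Every state reachable from the initial one is already reachable by insertions alone: an
insertion of a present tuple or a deletion of an absent one does nothing (H3), and deleting a
present tuple `a` undoes its insertion (H2) once that insertion is moved to the end of the
insertion sequence, which commutation of insertions (H1) allows. Two insertion-reachable states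
with the same database are then equal, by induction on one of them: the last insertion is either
redundant (H3) or can also be moved to the end of the other sequence.
-/

section applyMod

variable {ρ : Type*} [DecidableEq ρ] {ar : ρ → ℕ} {D : Type*} (db : Database ρ ar D)

@[simp]
theorem applyMod_ins_apply_self (R : ρ) (a : Fin (ar R) → D) :
    applyMod (.ins R a) db R = insert a (db R) :=
  Function.update_self (β := fun R => Set (Fin (ar R) → D)) ..

@[simp]
theorem applyMod_del_apply_self (R : ρ) (a : Fin (ar R) → D) :
    applyMod (.del R a) db R = db R \ {a} :=
  Function.update_self (β := fun R => Set (Fin (ar R) → D)) ..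

@[simp]
theorem applyMod_ins_apply_of_ne {R R' : ρ} (hR : R' ≠ R) (a : Fin (ar R) → D) :
    applyMod (.ins R a) db R' = db R' :=
  Function.update_of_ne (β := fun R => Set (Fin (ar R) → D)) hR ..

@[simp]
theorem applyMod_del_apply_of_ne {R R' : ρ} (hR : R' ≠ R) (a : Fin (ar R) → D) :
    applyMod (.del R a) db R' = db R' :=
  Function.update_of_ne (β := fun R => Set (Fin (ar R) → D)) hR ..

theorem mem_applyMod_ins_iff {R R' : ρ} (a : Fin (ar R) → D) (b : Fin (ar R') → D) :
    a ∈ applyMod (.ins R' b) db R ↔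
      (⟨R', b⟩ : Σ R, Fin (ar R) → D) = ⟨R, a⟩ ∨ a ∈ db R := by
  by_cases hR : R = R'
  · subst hR
    simp [eq_comm]
  · simp [hR, Ne.symm hR]

variable {db} in
theorem applyMod_del_applyMod_ins {R : ρ} {a : Fin (ar R) → D} (ha : a ∉ db R) :
    applyMod (.del R a) (applyMod (.ins R a) db) = db := by
  funext R'
  by_cases hR : R' = R
  · subst hR
    simp [Set.insert_sdiff_self_of_notMem ha]
  · simp [hR]

end applyMod

namespace DynProgram

variable {ρ : Type*} [DecidableEq ρ] {ar : ρ → ℕ} {D S : Type*} {P : DynProgram ρ ar D S}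

inductive InsertionReachable (P : DynProgram ρ ar D S) : S → Prop
  | init : InsertionReachable P P.init
  | ins {s : S} (R : ρ) (a : Fin (ar R) → D) :
      InsertionReachable P s → InsertionReachable P (P.step (.ins R a) s)

theorem mem_inp_step_ins_iff (s : S) {R R' : ρ} (a : Fin (ar R) → D) (b : Fin (ar R') → D) :
    a ∈ P.inp (P.step (.ins R' b) s) R ↔
      (⟨R', b⟩ : Σ R, Fin (ar R) → D) = ⟨R, a⟩ ∨ a ∈ P.inp s R := by
  rw [P.inp_step, mem_applyMod_ins_iff]

namespace InsertionReachable

theorem exists_stepSeq {s : S} (hs : P.InsertionReachable s) :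
    ∃ β : List (Modification ρ ar D), (∀ δ ∈ β, δ.IsInsertion) ∧ P.stepSeq β P.init = s := by
  induction hs with
  | init => exact ⟨[], by simp, rfl⟩
  | ins R a _ ih =>
    obtain ⟨β, hβ, rfl⟩ := ih
    refine ⟨β ++ [.ins R a], ?_, by simp [stepSeq]⟩
    simpa [or_imp, forall_and] using ⟨hβ, R, a, rfl⟩

theorem eq_init_of_inp_eq_emptyDb {s : S} (hs : P.InsertionReachable s)
    (hempty : P.inp s = emptyDb) : s = P.init := by
  cases hs with
  | init => rfl
  | @ins s R a _ =>
    have hmem : a ∈ P.inp (P.step (.ins R a) s) R := by simp [P.inp_step]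
    simp [hempty, emptyDb] at hmem

variable (hP : ∀ s, P.InsertionReachable s → LocallyHI P s)
include hP

theorem exists_eq_step_ins_of_mem {s : S} (hs : P.InsertionReachable s) {R : ρ}
    {a : Fin (ar R) → D} (ha : a ∈ P.inp s R) :
    ∃ t, P.InsertionReachable t ∧ a ∉ P.inp t R ∧ P.step (.ins R a) t = s := by
  induction hs with
  | init => simp [P.inp_init, emptyDb] at ha
  | @ins s R' b hs ih =>
    by_cases hba : (⟨R', b⟩ : Σ R, Fin (ar R) → D) = ⟨R, a⟩
    · obtain ⟨rfl, hb⟩ := Sigma.mk.inj_iff.1 hba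
      cases hb
      by_cases has : b ∈ P.inp s R'
      · rw [((hP s hs).2.2 R' b).1 has]
        exact ih has
      · exact ⟨s, hs, has, rfl⟩
    · obtain ⟨t, ht, hat, rfl⟩ := ih (((P.mem_inp_step_ins_iff s a b).1 ha).resolve_left hba)
      refine ⟨P.step (.ins R' b) t, ht.ins R' b, ?_, ?_⟩
      · rw [P.mem_inp_step_ins_iff, not_or]
        exact ⟨hba, hat⟩
      · exact (hP t ht).1 _ _ ⟨R', b, rfl⟩ ⟨R, a, rfl⟩

theorem step {s : S} (hs : P.InsertionReachable s) (δ : Modification ρ ar D) :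
    P.InsertionReachable (P.step δ s) := by
  cases δ with
  | ins R a => exact hs.ins R a
  | del R a =>
    by_cases ha : a ∈ P.inp s R
    · obtain ⟨t, ht, hat, rfl⟩ := exists_eq_step_ins_of_mem hP hs ha
      rwa [(hP t ht).2.1 R a hat]
    · rwa [((hP s hs).2.2 R a).2 ha]

theorem stepSeq {s : S} (hs : P.InsertionReachable s) (α : List (Modification ρ ar D)) :
    P.InsertionReachable (P.stepSeq α s) := by
  induction α generalizing s with
  | nil => exact hs
  | cons δ α ih => exact ih (hs.step hP δ)

theorem eq_of_inp_eq {s₁ s₂ : S} (hs₁ : P.InsertionReachable s₁)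
    (hs₂ : P.InsertionReachable s₂) (hinp : P.inp s₁ = P.inp s₂) : s₁ = s₂ := by
  induction hs₁ generalizing s₂ with
  | init => exact (hs₂.eq_init_of_inp_eq_emptyDb (hinp ▸ P.inp_init)).symm
  | @ins s R a hs ih =>
    by_cases has : a ∈ P.inp s R
    · rw [((hP s hs).2.2 R a).1 has] at hinp ⊢
      exact ih hs₂ hinp
    · have ha₂ : a ∈ P.inp s₂ R := by simp [← hinp, P.inp_step]
      obtain ⟨t, ht, hat, rfl⟩ := exists_eq_step_ins_of_mem hP hs₂ ha₂
      have hinp' : P.inp s = P.inp t := by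
        rw [← applyMod_del_applyMod_ins has, ← applyMod_del_applyMod_ins hat,
          ← P.inp_step (.ins R a) s, ← P.inp_step (.ins R a) t, hinp]
      rw [ih ht hinp']

end InsertionReachable

end DynProgram

/-- If every state reachable from the initial state by insertion-only sequences
is locally history independent, then the program is history independent: any
two modification sequences from the empty initial database yielding the same
input database yield the same state. -/
theorem historyIndependent_of_locallyHI {ρ : Type*} [DecidableEq ρ]
    {ar : ρ → ℕ} {D S : Type*} (P : DynProgram ρ ar D S)
    (h : ∀ (α : List (Modification ρ ar D)),
      (∀ δ ∈ α, δ.IsInsertion) → LocallyHI P (P.stepSeq α P.init)) :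
    ∀ α₁ α₂ : List (Modification ρ ar D),
      P.inp (P.stepSeq α₁ P.init) = P.inp (P.stepSeq α₂ P.init) →
      P.stepSeq α₁ P.init = P.stepSeq α₂ P.init := by
  have hP : ∀ s, P.InsertionReachable s → LocallyHI P s := fun s hs => by
    obtain ⟨β, hβ, rfl⟩ := hs.exists_stepSeq
    exact h β hβ
  intro α₁ α₂ hinp
  exact (DynProgram.InsertionReachable.init.stepSeq hP α₁).eq_of_inp_eq hP
    (DynProgram.InsertionReachable.init.stepSeq hP α₂) hinp
end

section
/- Let M = (Q, C, Δ, q_i, F) be a counter automaton with counters C. If M has an accepting run in which every counter stays bounded by m, then for every finite domain D with |D| ≥ m there exists a corresponding sequence of set-insertions and set-deletions over D (one unary set per counter) realizing the run: each increment of counter c corresponds to inserting a fresh element into set U_c, each decrement to deleting an element from U_c, and at every point |U_c| equals the value of counter c. -/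
/-- Operations of a counter automaton: increment, decrement and zero-test. -/
inductive CounterOp (C : Type*) where
  | inc (c : C)
  | dec (c : C)
  | ifzero (c : C)

/-- A counter automaton with states `Q`, counters `C`, transition relation,
initial state and accepting states. -/
structure CounterAutomaton (Q C : Type*) where
  Δ : Set (Q × CounterOp C × Q)
  init : Q
  accept : Set Q

/-- Applicability of a transition `t` to configurations: `t` leads from
configuration `cfg` to configuration `cfg'`. -/
def CAStep {Q C : Type*} [DecidableEq C] (t : Q × CounterOp C × Q)
    (cfg cfg' : Q × (C → ℕ)) : Prop :=
  cfg.1 = t.1 ∧ cfg'.1 = t.2.2 ∧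
  match t.2.1 with
  | .inc c => cfg'.2 = Function.update cfg.2 c (cfg.2 c + 1)
  | .dec c => 0 < cfg.2 c ∧ cfg'.2 = Function.update cfg.2 c (cfg.2 c - 1)
  | .ifzero c => cfg.2 c = 0 ∧ cfg'.2 = cfg.2

/-- One step of the set-based simulation: an increment of counter `c` inserts a
fresh element into the set `U c`, a decrement deletes an element from `U c`,
and a zero-test leaves all sets unchanged. -/
def SimStep {C D : Type*} [DecidableEq D] (op : CounterOp C)
    (U U' : C → Finset D) : Prop :=
  match op with
  | .inc c => (∃ d ∉ U c, U' c = insert d (U c)) ∧ ∀ c', c' ≠ c → U' c' = U c'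
  | .dec c => (∃ d ∈ U c, U' c = (U c).erase d) ∧ ∀ c', c' ≠ c → U' c' = U c'
  | .ifzero _ => U' = U

noncomputable def nextSet {C D : Type*} [DecidableEq C] [DecidableEq D] [Fintype D]
    (op : CounterOp C) (U : C → Finset D) : C → Finset D :=
  match op with
  | .inc c => if h : ((U c)ᶜ : Finset D).Nonempty then
      Function.update U c (insert h.choose (U c)) else U
  | .dec c => if h : (U c).Nonempty then
      Function.update U c ((U c).erase h.choose) else U
  | .ifzero _ => U

/-- If a counter automaton has an accepting run in which every counter stays
bounded by `m`, then over any finite domain `D` with `|D| ≥ m` the run can be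
realized by a sequence of single-element set insertions and deletions (one
unary set `U c` per counter `c`), starting from empty sets, such that at every
point `|U c|` equals the value of counter `c`. -/
theorem counter_run_realized_by_sets {Q C D : Type*} [DecidableEq C]
    [DecidableEq D] [Fintype D] (M : CounterAutomaton Q C) (n m : ℕ)
    (cfgs : ℕ → Q × (C → ℕ)) (ts : ℕ → Q × CounterOp C × Q)
    (h0 : cfgs 0 = (M.init, fun _ => 0))
    (hrun : ∀ i < n, ts i ∈ M.Δ ∧ CAStep (ts i) (cfgs i) (cfgs (i + 1)))
    (hacc : (cfgs n).1 ∈ M.accept)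
    (hbound : ∀ i ≤ n, ∀ c, (cfgs i).2 c ≤ m)
    (hD : m ≤ Fintype.card D) :
    ∃ U : ℕ → C → Finset D,
      (∀ c, U 0 c = ∅) ∧
      (∀ i ≤ n, ∀ c, (U i c).card = (cfgs i).2 c) ∧
      (∀ i < n, SimStep (ts i).2.1 (U i) (U (i + 1))) := by
  classical
  set U : ℕ → C → Finset D := fun i =>
    Nat.rec (fun _ => (∅ : Finset D)) (fun i Ui => nextSet (ts i).2.1 Ui) i with hU
  have hU0 : ∀ c, U 0 c = ∅ := fun c => rfl
  have hUsucc : ∀ i, U (i + 1) = nextSet (ts i).2.1 (U i) := fun i => rfl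
  have hcard : ∀ i ≤ n, ∀ c, (U i c).card = (cfgs i).2 c := by
    intro i
    induction i with
    | zero => intro _ c; simp [hU0, h0]
    | succ i ih =>
      intro hin c
      have hi : i < n := Nat.lt_of_succ_le hin
      have ihc := ih (le_of_lt hi)
      obtain ⟨_, _, _, hstep⟩ := hrun i hi
      rw [hUsucc]
      cases hop : (ts i).2.1 with
      | inc c0 =>
        rw [hop] at hstep
        have hlt : (U i c0).card < Fintype.card D := by
          have h1 : (cfgs (i+1)).2 c0 ≤ m := hbound (i+1) hin c0
          have h2 : (cfgs (i+1)).2 c0 = (cfgs i).2 c0 + 1 := by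
            rw [hstep]; simp [Function.update]
          rw [ihc c0]; omega
        have hne : ((U i c0)ᶜ : Finset D).Nonempty := by
          rw [← Finset.card_pos, Finset.card_compl]; omega
        have hmem := hne.choose_spec
        simp only [nextSet, dif_pos hne, hstep]
        rcases eq_or_ne c c0 with rfl | hcc
        · simp only [Function.update_self]
          rw [Finset.card_insert_of_notMem (by simpa using hmem), ihc c]
        · simp [Function.update_of_ne hcc, ihc c]
      | dec c0 =>
        rw [hop] at hstep
        obtain ⟨hpos, hstep⟩ := hstep
        have hne : (U i c0).Nonempty := by
          rw [← Finset.card_pos, ihc c0]; exact hpos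
        have hmem := hne.choose_spec
        simp only [nextSet, dif_pos hne, hstep]
        rcases eq_or_ne c c0 with rfl | hcc
        · simp only [Function.update_self]
          rw [Finset.card_erase_of_mem hmem, ihc c]
        · simp [Function.update_of_ne hcc, ihc c]
      | ifzero c0 =>
        rw [hop] at hstep
        simp [nextSet, hstep.2, ihc c]
  refine ⟨U, hU0, hcard, ?_⟩
  intro i hi
  obtain ⟨_, _, _, hstep⟩ := hrun i hi
  rw [hUsucc]
  cases hop : (ts i).2.1 with
  | inc c0 =>
    rw [hop] at hstep
    have hlt : (U i c0).card < Fintype.card D := by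
      have h1 : (cfgs (i+1)).2 c0 ≤ m := hbound (i+1) hi c0
      have h2 : (cfgs (i+1)).2 c0 = (cfgs i).2 c0 + 1 := by
        rw [hstep]; simp [Function.update]
      rw [hcard i (le_of_lt hi) c0]; omega
    have hne : ((U i c0)ᶜ : Finset D).Nonempty := by
      rw [← Finset.card_pos, Finset.card_compl]; omega
    have hmem := hne.choose_spec
    simp only [nextSet, dif_pos hne, SimStep]
    exact ⟨⟨hne.choose, by simpa using hmem, by simp⟩,
      fun c' hc' => Function.update_of_ne hc' _ _⟩
  | dec c0 =>
    rw [hop] at hstep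
    obtain ⟨hpos, hstep⟩ := hstep
    have hne : (U i c0).Nonempty := by
      rw [← Finset.card_pos, hcard i (le_of_lt hi) c0]; exact hpos
    have hmem := hne.choose_spec
    simp only [nextSet, dif_pos hne, SimStep]
    exact ⟨⟨hne.choose, hmem, by simp⟩,
      fun c' hc' => Function.update_of_ne hc' _ _⟩
  | ifzero c0 =>
    simp [nextSet, SimStep]
end

section
/- Let q ∈ ℕ and fix a relational signature. If two structures with distinguished tuples (S, a⃗) and (S', a⃗') have the same rank-(q+1) first-order type, then for every quantifier-free-definable-from-formulas-of-depth-q update (each relation of the updated structure defined by a first-order formula of quantifier depth at most q with parameters a⃗ resp. a⃗'), the updated structures have the same rank-1 type; more generally, elements b, b' having the same color and satisfying (b = a ↔ b' = a') receive the same new color after the update. -/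
open FirstOrder FirstOrder.Language

/-- The purely unary relational signature with `m` unary relation symbols. -/
def unaryLang (m : ℕ) : FirstOrder.Language where
  Functions := fun _ => Empty
  Relations := fun n => match n with
    | 1 => Fin m
    | _ => Empty

/-- The `i`-th unary relation symbol of `unaryLang m`. -/
def relIdx (m : ℕ) (i : Fin m) : (unaryLang m).Relations 1 := i

/-- Quantifier depth of a first-order formula. -/
def qdepth {L : FirstOrder.Language} {α : Type*} :
    {n : ℕ} → L.BoundedFormula α n → ℕ
  | _, .falsum => 0
  | _, .equal _ _ => 0
  | _, .rel _ _ => 0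
  | _, .imp f g => max (qdepth f) (qdepth g)
  | _, .all f => qdepth f + 1

/-- The structure obtained by redefining each unary relation `i` as the set of
elements `b` satisfying the update formula `u i` with parameter `a` (variable
`0` is the parameter, variable `1` the argument). -/
def updatedStructure {m : ℕ} {A : Type} [(unaryLang m).Structure A]
    (u : Fin m → (unaryLang m).Formula (Fin 2)) (a : A) :
    (unaryLang m).Structure A where
  funMap := fun {_} f _ => f.elim
  RelMap := fun {n} r x =>
    match n, r, x with
    | 1, i, x => (u i).Realize ![a, x 0]
    | 0, r, _ => r.elim
    | (_ + 2), r, _ => r.elim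

/-!
Over a unary signature the new color of `b` is the truth vector of `u i (a, b)`, and this vector
depends only on the old color of `b` and on whether `b = a`. For `b = a` it is read off the depth-`q`
formula `u i (x, x)`. For `b ≠ a`, the depth-`(q + 1)` formula
`∃ y, y ≠ x ∧ (y has the color of b) ∧ u i (x, y)` carries a witness from `(S, a)` to `(S', a')`, and
the transposition of that witness with `b'` is an automorphism of `S'` fixing `a'`.
Taking `u i = ⊤` in the same formula, every element of `S` has a partner in `S'` with the same old
color and the same equality to the parameter, and conversely; so both updated structures realize
the same new colors, which is all a sentence of quantifier depth `1` can see.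
-/

open FirstOrder.Language.BoundedFormula

universe u

section QuantifierDepth

variable {L : FirstOrder.Language} {α : Type*} {n : ℕ}

@[simp] theorem qdepth_equal (t₁ t₂ : L.Term α) : qdepth (t₁.equal t₂) = 0 := rfl

@[simp] theorem qdepth_imp (φ ψ : L.BoundedFormula α n) :
    qdepth (φ.imp ψ) = max (qdepth φ) (qdepth ψ) := rfl

@[simp] theorem qdepth_not (φ : L.BoundedFormula α n) : qdepth φ.not = qdepth φ := by
  simp [qdepth]

@[simp] theorem qdepth_inf (φ ψ : L.BoundedFormula α n) :
    qdepth (φ ⊓ ψ) = max (qdepth φ) (qdepth ψ) := by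
  simp [min, BoundedFormula.not, qdepth]

@[simp] theorem qdepth_all (φ : L.BoundedFormula α (n + 1)) : qdepth φ.all = qdepth φ + 1 := rfl

@[simp] theorem qdepth_ex (φ : L.BoundedFormula α (n + 1)) : qdepth φ.ex = qdepth φ + 1 := by
  simp [BoundedFormula.ex]

@[simp] theorem qdepth_relabel {β : Type*} (g : α → β ⊕ Fin n) {k : ℕ}
    (φ : L.BoundedFormula α k) : qdepth (φ.relabel g) = qdepth φ := by
  induction φ with
  | imp φ ψ ihφ ihψ => simp [ihφ, ihψ]
  | all φ ih => simp [ih]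
  | _ => rfl

theorem FirstOrder.Language.BoundedFormula.IsQF.qdepth_eq_zero {φ : L.BoundedFormula α n}
    (h : φ.IsQF) : qdepth φ = 0 := by
  induction h with
  | falsum => rfl
  | of_isAtomic h => cases h <;> rfl
  | imp _ _ ih₁ ih₂ => simp [ih₁, ih₂]

theorem isQF_of_qdepth_eq_zero {φ : L.BoundedFormula α n} (h : qdepth φ = 0) : φ.IsQF := by
  induction φ with
  | falsum => exact IsQF.falsum
  | equal => exact (IsAtomic.equal _ _).isQF
  | rel => exact (IsAtomic.rel _ _).isQF
  | imp φ ψ ihφ ihψ =>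
    simp only [qdepth_imp, Nat.max_eq_zero_iff] at h
    exact (ihφ h.1).imp (ihψ h.2)
  | all => simp at h

theorem isQF_iInf {β : Type*} [Finite β] {f : β → L.BoundedFormula α n}
    (h : ∀ b, (f b).IsQF) : (iInf f).IsQF := by
  let _ := Fintype.ofFinite β
  suffices ∀ l : List β, (l.map f).foldr (· ⊓ ·) ⊤ |>.IsQF from this _
  intro l
  induction l with
  | nil => exact IsQF.top
  | cons b l ih => exact (h b).inf ih

end QuantifierDepth

section Formulas

variable {L : FirstOrder.Language} {M : Type*} [L.Structure M]

/-- `exSnd ψ` is `∃ y, ψ(x, y)`. -/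
def exSnd (ψ : L.Formula (Fin 2)) : L.Formula (Fin 1) :=
  (BoundedFormula.relabel ![Sum.inl 0, Sum.inr 0] ψ).ex

@[simp] theorem qdepth_exSnd (ψ : L.Formula (Fin 2)) : qdepth (exSnd ψ) = qdepth ψ + 1 := by
  simp [exSnd]

theorem realize_exSnd (ψ : L.Formula (Fin 2)) (v : Fin 1 → M) :
    (exSnd ψ).Realize v ↔ ∃ y : M, ψ.Realize ![v 0, y] := by
  simp only [exSnd, Formula.Realize, realize_ex, realize_relabel]
  refine exists_congr fun y => iff_of_eq ?_
  congr 1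
  · ext j; fin_cases j <;> rfl
  · exact Subsingleton.elim _ _

theorem realize_relabel_diag (ψ : L.Formula (Fin 2)) (x : M) :
    (ψ.relabel fun _ => 0).Realize ![x] ↔ ψ.Realize ![x, x] := by
  rw [Formula.realize_relabel]
  exact iff_of_eq (congrArg _ (by ext j; fin_cases j <;> rfl))

end Formulas

section Types

variable {L : FirstOrder.Language} {A B : Type*} [L.Structure A] [L.Structure B]

variable (L) in
def TypeEquiv (k : ℕ) (a : A) (b : B) : Prop :=
  ∀ φ : L.Formula (Fin 1), qdepth φ ≤ k → (φ.Realize ![a] ↔ φ.Realize ![b])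

theorem TypeEquiv.symm {k : ℕ} {a : A} {b : B} (h : TypeEquiv L k a b) :
    TypeEquiv L k b a :=
  fun φ hφ => (h φ hφ).symm

theorem TypeEquiv.realize_diag_iff {q : ℕ} {a : A} {b : B} (h : TypeEquiv L q a b)
    {ψ : L.Formula (Fin 2)} (hψ : qdepth ψ ≤ q) : ψ.Realize ![a, a] ↔ ψ.Realize ![b, b] := by
  rw [← realize_relabel_diag, ← realize_relabel_diag]
  exact h _ (by rwa [Formula.relabel, qdepth_relabel])

end Types

section UnarySignature

variable {m : ℕ}

theorem unaryLang.exists_eq_var {β : Type*} (t : (unaryLang m).Term β) : ∃ k, t = var k := by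
  cases t with
  | var k => exact ⟨k, rfl⟩
  | func f _ => exact (f : Empty).elim

theorem unaryLang.arity_eq_one {k : ℕ} (R : (unaryLang m).Relations k) : k = 1 := by
  match k, R with
  | 1, _ => rfl
  | 0, R => exact (R : Empty).elim
  | _ + 2, R => exact (R : Empty).elim

section Colors

variable {M N K : Type*} [(unaryLang m).Structure M] [(unaryLang m).Structure N]
  [(unaryLang m).Structure K]

variable (m) in
def SameColor (x : M) (y : N) : Prop :=
  ∀ i, Structure.RelMap (relIdx m i) ![x] ↔ Structure.RelMap (relIdx m i) ![y]

theorem SameColor.refl (x : M) : SameColor m x x := fun _ => Iff.rfl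

theorem SameColor.symm {x : M} {y : N} (h : SameColor m x y) : SameColor m y x :=
  fun i => (h i).symm

theorem SameColor.trans {x : M} {y : N} {z : K} (h : SameColor m x y) (h' : SameColor m y z) :
    SameColor m x z :=
  fun i => (h i).trans (h' i)

variable (m) in
open Classical in
noncomputable def colorFormula {α : Type*} (b : N) (k : α) : (unaryLang m).Formula α :=
  Formula.iInf fun i =>
    if Structure.RelMap (relIdx m i) ![b] then (relIdx m i).formula₁ (var k)
    else ∼((relIdx m i).formula₁ (var k))

theorem realize_colorFormula {α : Type*} (b : N) (k : α) (v : α → M) :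
    (colorFormula m b k).Realize v ↔ SameColor m (v k) b := by
  simp only [colorFormula, Formula.realize_iInf]
  refine forall_congr' fun i => ?_
  split_ifs with hb <;> simp [hb]

@[simp] theorem qdepth_colorFormula {α : Type*} (b : N) (k : α) :
    qdepth (colorFormula m b k) = 0 :=
  IsQF.qdepth_eq_zero <| isQF_iInf fun i => by
    split_ifs
    · exact (IsAtomic.rel _ _).isQF
    · exact (IsAtomic.rel _ _).isQF.not

theorem SameColor.swap_apply [DecidableEq M] {c d : M} (h : SameColor m c d) (z : M) :
    SameColor m (Equiv.swap c d z) z := by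
  rcases eq_or_ne z c with rfl | hc
  · simpa using h.symm
  rcases eq_or_ne z d with rfl | hd
  · simpa using h
  · rw [Equiv.swap_apply_of_ne_of_ne hc hd]
    exact .refl z

def SameColor.swapEquiv [DecidableEq M] {c d : M} (h : SameColor m c d) :
    M ≃[unaryLang m] M where
  toEquiv := Equiv.swap c d
  map_fun' f := (f : Empty).elim
  map_rel' R x := by
    obtain rfl := unaryLang.arity_eq_one R
    have hx : x = ![x 0] := by ext j; fin_cases j; rfl
    have hsx : Equiv.swap c d ∘ x = ![Equiv.swap c d (x 0)] := by ext j; fin_cases j; rfl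
    change Structure.RelMap R (Equiv.swap c d ∘ x) ↔ _
    rw [hsx, hx]
    exact h.swap_apply (x 0) R

theorem SameColor.realize_iff_of_ne {c d p : M} (h : SameColor m c d) (hc : c ≠ p) (hd : d ≠ p)
    (ψ : (unaryLang m).Formula (Fin 2)) : ψ.Realize ![p, c] ↔ ψ.Realize ![p, d] := by
  classical
  rw [← StrongHomClass.realize_formula h.swapEquiv]
  congr!
  ext j
  fin_cases j
  · exact Equiv.swap_apply_of_ne_of_ne hc.symm hd.symm
  · exact Equiv.swap_apply_left c d

end Colors

section QuantifierFree

variable {M N : Type*} [(unaryLang m).Structure M] [(unaryLang m).Structure N]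

theorem realize_iff_of_isQF {α : Type*} {n : ℕ} {φ : (unaryLang m).BoundedFormula α n}
    (hφ : φ.IsQF) {v : α → M} {xs : Fin n → M} {v' : α → N} {xs' : Fin n → N}
    (hcol : ∀ k, SameColor m (Sum.elim v xs k) (Sum.elim v' xs' k))
    (heq : ∀ k l, Sum.elim v xs k = Sum.elim v xs l ↔ Sum.elim v' xs' k = Sum.elim v' xs' l) :
    φ.Realize v xs ↔ φ.Realize v' xs' := by
  induction hφ with
  | falsum => rfl
  | of_isAtomic h =>
    cases h with
    | equal t₁ t₂ =>
      obtain ⟨k, rfl⟩ := unaryLang.exists_eq_var t₁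
      obtain ⟨l, rfl⟩ := unaryLang.exists_eq_var t₂
      exact heq k l
    | rel R ts =>
      obtain rfl := unaryLang.arity_eq_one R
      obtain ⟨k, hk⟩ := unaryLang.exists_eq_var (ts 0)
      have hts : ts = ![var k] := by ext j; fin_cases j; exact hk
      subst hts
      simp only [realize_rel, Matrix.cons_val_fin_one, Term.realize_var,
        ← Matrix.vec_single_eq_const]
      exact hcol k R
  | imp _ _ ih₁ ih₂ => exact imp_congr ih₁ ih₂

end QuantifierFree

theorem realize_sentence_iff_of_forall_exists_sameColor {M N : Type*}
    [(unaryLang m).Structure M] [(unaryLang m).Structure N]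
    (hMN : ∀ x : M, ∃ y : N, SameColor m x y) (hNM : ∀ y : N, ∃ x : M, SameColor m y x)
    (φ : (unaryLang m).Sentence) (hφ : qdepth φ ≤ 1) : M ⊨ φ ↔ N ⊨ φ := by
  suffices ∀ {n} (φ : (unaryLang m).BoundedFormula Empty n), n = 0 → qdepth φ ≤ 1 →
      ∀ (xs : Fin n → M) (xs' : Fin n → N), φ.Realize default xs ↔ φ.Realize default xs' from
    this φ rfl hφ default default
  intro n φ
  induction φ with
  | imp φ ψ ihφ ihψ =>
    intro hn hd xs xs'
    rw [qdepth_imp, max_le_iff] at hd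
    exact imp_congr (ihφ hn hd.1 xs xs') (ihψ hn hd.2 xs xs')
  | all φ =>
    rintro rfl hd xs xs'
    have hφ : φ.IsQF := isQF_of_qdepth_eq_zero (by simpa using hd)
    have key : ∀ x y, SameColor m x y →
        (φ.Realize default (Fin.snoc xs x) ↔ φ.Realize default (Fin.snoc xs' y)) :=
      fun x y hxy => realize_iff_of_isQF hφ (Sum.rec isEmptyElim fun _ => hxy)
        (Sum.rec isEmptyElim fun _ => Sum.rec isEmptyElim fun _ => iff_of_true rfl rfl)
    refine ⟨fun h y => ?_, fun h x => ?_⟩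
    · obtain ⟨x, hyx⟩ := hNM y
      exact (key x y hyx.symm).1 (h x)
    · obtain ⟨y, hxy⟩ := hMN x
      exact (key x y hxy).2 (h y)
  | _ =>
    rintro rfl - xs xs'
    exact realize_iff_of_isQF (isQF_of_qdepth_eq_zero rfl) isEmptyElim isEmptyElim

namespace TypeEquiv

variable {A B : Type u} [(unaryLang m).Structure A] [(unaryLang m).Structure B] {a : A} {a' : B}

theorem sameColor {k : ℕ} (h : TypeEquiv (unaryLang m) k a a') : SameColor m a a' := fun i => by
  simpa using h ((relIdx m i).formula₁ (var 0)) (Nat.zero_le k)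

theorem exists_ne_sameColor_realize {q : ℕ} (h : TypeEquiv (unaryLang m) (q + 1) a a')
    {ψ : (unaryLang m).Formula (Fin 2)} (hψ : qdepth ψ ≤ q) {b : A} (hba : b ≠ a)
    (hb : ψ.Realize ![a, b]) : ∃ y : B, y ≠ a' ∧ SameColor m b y ∧ ψ.Realize ![a', y] := by
  let χ : (unaryLang m).Formula (Fin 2) := ∼((var 1).equal (var 0)) ⊓ colorFormula m b 1 ⊓ ψ
  have hχ : ∀ {M : Type u} [(unaryLang m).Structure M] (p y : M),
      χ.Realize ![p, y] ↔ y ≠ p ∧ SameColor m y b ∧ ψ.Realize ![p, y] := by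
    intro M _ p y
    simp [χ, realize_colorFormula, and_assoc]
  have hd : qdepth (exSnd χ) ≤ q + 1 := by simp [χ, hψ]
  have hA : (exSnd χ).Realize ![a] := (realize_exSnd _ _).2 ⟨b, (hχ a b).2 ⟨hba, .refl b, hb⟩⟩
  obtain ⟨y, hy⟩ := (realize_exSnd _ _).1 ((h _ hd).1 hA)
  obtain ⟨hya, hyb, hψy⟩ := (hχ a' y).1 hy
  exact ⟨y, hya, hyb.symm, hψy⟩

theorem exists_sameColor_and_eq_iff {q : ℕ} (h : TypeEquiv (unaryLang m) (q + 1) a a') (x : A) :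
    ∃ y : B, SameColor m x y ∧ (x = a ↔ y = a') := by
  by_cases hxa : x = a
  · exact ⟨a', hxa ▸ h.sameColor, iff_of_true hxa rfl⟩
  · obtain ⟨y, hya, hxy, -⟩ := h.exists_ne_sameColor_realize (ψ := ⊤) (Nat.zero_le q) hxa (by simp)
    exact ⟨y, hxy, iff_of_false hxa hya⟩

theorem realize_of_realize {q : ℕ} (h : TypeEquiv (unaryLang m) (q + 1) a a')
    {ψ : (unaryLang m).Formula (Fin 2)} (hψ : qdepth ψ ≤ q) {b : A} {b' : B}
    (hbb' : SameColor m b b') (hba : b = a ↔ b' = a') (hb : ψ.Realize ![a, b]) :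
    ψ.Realize ![a', b'] := by
  by_cases hb_eq : b = a
  · obtain rfl := hb_eq
    obtain rfl := hba.1 rfl
    exact (h.realize_diag_iff (hψ.trans q.le_succ)).1 hb
  · obtain ⟨y, hya, hby, hy⟩ := h.exists_ne_sameColor_realize hψ hb_eq hb
    exact ((hby.symm.trans hbb').realize_iff_of_ne hya (mt hba.2 hb_eq) ψ).1 hy

theorem realize_iff {q : ℕ} (h : TypeEquiv (unaryLang m) (q + 1) a a')
    {ψ : (unaryLang m).Formula (Fin 2)} (hψ : qdepth ψ ≤ q) {b : A} {b' : B}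
    (hbb' : SameColor m b b') (hba : b = a ↔ b' = a') :
    ψ.Realize ![a, b] ↔ ψ.Realize ![a', b'] :=
  ⟨h.realize_of_realize hψ hbb' hba, h.symm.realize_of_realize hψ hbb'.symm hba.symm⟩

end TypeEquiv

theorem TypeEquiv.sameColor_updatedStructure {A B : Type} [(unaryLang m).Structure A]
    [(unaryLang m).Structure B] {a : A} {a' : B} {q : ℕ}
    (h : TypeEquiv (unaryLang m) (q + 1) a a') {u : Fin m → (unaryLang m).Formula (Fin 2)}
    (hu : ∀ i, qdepth (u i) ≤ q) {b : A} {b' : B} (hbb' : SameColor m b b')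
    (hba : b = a ↔ b' = a') :
    @SameColor m A B (updatedStructure u a) (updatedStructure u a') b b' :=
  fun i => h.realize_iff (hu i) hbb' hba

end UnarySignature

/-- If `(S, a)` and `(S', a')` have the same rank-`(q+1)` first-order type over
a purely unary signature, then for every update defined by formulas of
quantifier depth at most `q` (with parameter `a` resp. `a'`), the updated
structures have the same rank-`1` type; more generally, elements `b`, `b'`
with the same color satisfying `b = a ↔ b' = a'` receive the same new color
after the update. -/
theorem update_preserves_type (m q : ℕ) {A B : Type}
    [(unaryLang m).Structure A] [(unaryLang m).Structure B] (a : A) (a' : B)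
    (htype : ∀ φ : (unaryLang m).Formula (Fin 1), qdepth φ ≤ q + 1 →
      (φ.Realize ![a] ↔ φ.Realize ![a']))
    (u : Fin m → (unaryLang m).Formula (Fin 2)) (hu : ∀ i, qdepth (u i) ≤ q) :
    (∀ ψ : (unaryLang m).Sentence, qdepth ψ ≤ 1 →
      (@Sentence.Realize (unaryLang m) A (updatedStructure u a) ψ ↔
        @Sentence.Realize (unaryLang m) B (updatedStructure u a') ψ)) ∧
    (∀ (b : A) (b' : B),
      (∀ i : Fin m,
        (Structure.RelMap (relIdx m i) ![b] ↔ Structure.RelMap (relIdx m i) ![b'])) →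
      ((b = a) ↔ (b' = a')) →
      ∀ i : Fin m, ((u i).Realize ![a, b] ↔ (u i).Realize ![a', b'])) := by
  have htype : TypeEquiv (unaryLang m) (q + 1) a a' := htype
  refine ⟨fun ψ hψ => ?_, fun b b' hbb' hba i => htype.realize_iff (hu i) hbb' hba⟩
  refine @realize_sentence_iff_of_forall_exists_sameColor m A B (updatedStructure u a)
    (updatedStructure u a') (fun x => ?_) (fun y => ?_) ψ hψ
  · obtain ⟨y, hxy, hxa⟩ := htype.exists_sameColor_and_eq_iff x
    exact ⟨y, htype.sameColor_updatedStructure hu hxy hxa⟩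
  · obtain ⟨x, hyx, hya⟩ := htype.symm.exists_sameColor_and_eq_iff y
    exact ⟨x, htype.symm.sameColor_updatedStructure hu hyx hya⟩
end

section
/- Let α and α' be two finite modification sequences (insertions and deletions of tuples) that, applied to the empty database, yield the same database. Then α' can be obtained from α by a finite sequence of 'innocuous transformations', each of which preserves the resulting database: (1) swapping two adjacent modifications that are not an insert/delete pair of the same fact; (2) removing an adjacent pair ins_R(a)·del_R(a) when a ∉ R at that point; (3) removing a modification that has no effect (inserting a present fact or deleting an absent fact); or the inverses of these. -/
/-- One innocuous transformation of a modification sequence (applied to the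
empty database): (1) swapping two adjacent modifications that are not an
insert/delete pair of the same fact of the same relation, (2) removing an
adjacent pair `ins_R(a)·del_R(a)` when `a ∉ R` at that point, (3) removing a
modification with no effect (inserting a present fact or deleting an absent
fact), or (4) the inverse of one of these. -/
inductive InnStep {ρ : Type*} [DecidableEq ρ] {ar : ρ → ℕ} {D : Type*} :
    List (Modification ρ ar D) → List (Modification ρ ar D) → Prop where
  | swap (pre post : List (Modification ρ ar D)) (δ₁ δ₂ : Modification ρ ar D)
      (h : ¬ ∃ (R : ρ) (a : Fin (ar R) → D),
        (δ₁ = .ins R a ∧ δ₂ = .del R a) ∨ (δ₁ = .del R a ∧ δ₂ = .ins R a)) :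
      InnStep (pre ++ δ₁ :: δ₂ :: post) (pre ++ δ₂ :: δ₁ :: post)
  | removePair (pre post : List (Modification ρ ar D)) (R : ρ)
      (a : Fin (ar R) → D) (h : a ∉ applySeq pre emptyDb R) :
      InnStep (pre ++ .ins R a :: .del R a :: post) (pre ++ post)
  | removeNoopIns (pre post : List (Modification ρ ar D)) (R : ρ)
      (a : Fin (ar R) → D) (h : a ∈ applySeq pre emptyDb R) :
      InnStep (pre ++ .ins R a :: post) (pre ++ post)
  | removeNoopDel (pre post : List (Modification ρ ar D)) (R : ρ)
      (a : Fin (ar R) → D) (h : a ∉ applySeq pre emptyDb R) :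
      InnStep (pre ++ .del R a :: post) (pre ++ post)
  | inv {α α' : List (Modification ρ ar D)} : InnStep α α' → InnStep α' α

def Modification.IsIns {ρ : Type*} {ar : ρ → ℕ} {D : Type*} :
    Modification ρ ar D → Prop
  | .ins _ _ => True
  | .del _ _ => False

theorem Database.ext {ρ : Type*} {ar : ρ → ℕ} {D : Type*} {db db' : Database ρ ar D}
    (h : ∀ S x, x ∈ db S ↔ x ∈ db' S) : db = db' :=
  funext fun S => Set.ext (h S)

section
variable {ρ : Type*} [DecidableEq ρ] {ar : ρ → ℕ} {D : Type*}

@[simp] theorem applySeq_nil (db : Database ρ ar D) : applySeq [] db = db := rfl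

@[simp] theorem applySeq_cons (δ : Modification ρ ar D) (α : List (Modification ρ ar D))
    (db : Database ρ ar D) : applySeq (δ :: α) db = applySeq α (applyMod δ db) := rfl

@[simp] theorem applySeq_append (α β : List (Modification ρ ar D)) (db : Database ρ ar D) :
    applySeq (α ++ β) db = applySeq β (applySeq α db) :=
  List.foldl_append ..

-- Equality of modifications replaces heterogeneous equality of tuples of different relations.
theorem mem_applyMod_ins {R S : ρ} {a : Fin (ar R) → D} {x : Fin (ar S) → D}
    {db : Database ρ ar D} :
    x ∈ applyMod (.ins R a) db S ↔ x ∈ db S ∨ Modification.ins S x = .ins R a := by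
  by_cases hS : S = R
  · subst hS
    rw [applyMod, Function.update_self (β := fun R => Set (Fin (ar R) → D)) S _ db]
    simp [or_comm]
  · rw [applyMod, Function.update_of_ne (β := fun R => Set (Fin (ar R) → D)) hS _ db]
    simp [hS]

theorem mem_applyMod_del {R S : ρ} {a : Fin (ar R) → D} {x : Fin (ar S) → D}
    {db : Database ρ ar D} :
    x ∈ applyMod (.del R a) db S ↔ x ∈ db S ∧ Modification.del S x ≠ .del R a := by
  by_cases hS : S = R
  · subst hS
    rw [applyMod, Function.update_self (β := fun R => Set (Fin (ar R) → D)) S _ db]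
    simp
  · rw [applyMod, Function.update_of_ne (β := fun R => Set (Fin (ar R) → D)) hS _ db]
    simp [hS]

theorem applyMod_comm {δ₁ δ₂ : Modification ρ ar D}
    (h : ¬ ∃ (R : ρ) (a : Fin (ar R) → D),
      (δ₁ = .ins R a ∧ δ₂ = .del R a) ∨ (δ₁ = .del R a ∧ δ₂ = .ins R a))
    (db : Database ρ ar D) :
    applyMod δ₂ (applyMod δ₁ db) = applyMod δ₁ (applyMod δ₂ db) := by
  refine Database.ext fun S x => ?_
  have hSx := fun h' => h ⟨S, x, h'⟩
  obtain ⟨R₁, a₁⟩ | ⟨R₁, a₁⟩ := δ₁ <;> obtain ⟨R₂, a₂⟩ | ⟨R₂, a₂⟩ := δ₂ <;>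
    simp only [mem_applyMod_ins, mem_applyMod_del] <;> grind

theorem applyMod_ins_of_mem {R : ρ} {a : Fin (ar R) → D} {db : Database ρ ar D}
    (h : a ∈ db R) : applyMod (.ins R a) db = db :=
  Database.ext fun S x => by
    rw [mem_applyMod_ins]
    exact or_iff_left_of_imp (by rintro ⟨⟩; exact h)

theorem applyMod_del_of_notMem {R : ρ} {a : Fin (ar R) → D} {db : Database ρ ar D}
    (h : a ∉ db R) : applyMod (.del R a) db = db :=
  Database.ext fun S x => by
    rw [mem_applyMod_del]
    exact and_iff_left_of_imp fun hx => by rintro ⟨⟩; exact h hx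

theorem applyMod_del_applyMod_ins_of_notMem {R : ρ} {a : Fin (ar R) → D}
    {db : Database ρ ar D} (h : a ∉ db R) :
    applyMod (.del R a) (applyMod (.ins R a) db) = db :=
  Database.ext fun S x => by
    simp only [mem_applyMod_del, mem_applyMod_ins]
    constructor
    · rintro ⟨hx | hx, hne⟩
      · exact hx
      · cases hx
        exact absurd rfl hne
    · intro hx
      refine ⟨.inl hx, ?_⟩
      rintro ⟨⟩
      exact h hx

theorem InnStep.applySeq_eq {α α' : List (Modification ρ ar D)} (h : InnStep α α') :
    applySeq α emptyDb = applySeq α' emptyDb := by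
  induction h with
  | swap _ _ _ _ h => simp [applyMod_comm h]
  | removePair _ _ _ _ h => simp [applyMod_del_applyMod_ins_of_notMem h]
  | removeNoopIns _ _ _ _ h => simp [applyMod_ins_of_mem h]
  | removeNoopDel _ _ _ _ h => simp [applyMod_del_of_notMem h]
  | inv _ ih => exact ih.symm

theorem applySeq_eq_of_reflTransGen {α α' : List (Modification ρ ar D)}
    (h : Relation.ReflTransGen InnStep α α') :
    applySeq α emptyDb = applySeq α' emptyDb := by
  induction h with
  | refl => rfl
  | tail _ h ih => exact ih.trans h.applySeq_eq

instance : Std.Symm (@InnStep ρ _ ar D) := ⟨fun _ _ h => h.inv⟩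

theorem InnStep.append_right {α α' : List (Modification ρ ar D)} (h : InnStep α α')
    (γ : List (Modification ρ ar D)) : InnStep (α ++ γ) (α' ++ γ) := by
  induction h with
  | swap pre post δ₁ δ₂ h => simpa using InnStep.swap pre (post ++ γ) δ₁ δ₂ h
  | removePair pre post R a h => simpa using InnStep.removePair pre (post ++ γ) R a h
  | removeNoopIns pre post R a h => simpa using InnStep.removeNoopIns pre (post ++ γ) R a h
  | removeNoopDel pre post R a h => simpa using InnStep.removeNoopDel pre (post ++ γ) R a h
  | inv _ ih => exact ih.inv

theorem reflTransGen_append_right {α α' : List (Modification ρ ar D)}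
    (h : Relation.ReflTransGen InnStep α α') (γ : List (Modification ρ ar D)) :
    Relation.ReflTransGen InnStep (α ++ γ) (α' ++ γ) :=
  h.lift (· ++ γ) fun _ _ h => h.append_right γ

theorem reflTransGen_of_perm {L L' : List (Modification ρ ar D)} (hL : ∀ δ ∈ L, δ.IsIns)
    (hperm : L.Perm L') (pre : List (Modification ρ ar D)) :
    Relation.ReflTransGen InnStep (pre ++ L) (pre ++ L') := by
  induction hperm generalizing pre with
  | nil => rfl
  | cons δ _ ih =>
    simpa using ih (fun δ hδ => hL δ (.tail _ hδ)) (pre ++ [δ])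
  | swap δ₁ δ₂ l =>
    refine .single (InnStep.swap pre l δ₂ δ₁ ?_)
    have h₁ := hL δ₂ (by simp)
    have h₂ := hL δ₁ (by simp)
    rintro ⟨R, a, ⟨rfl, rfl⟩ | ⟨rfl, rfl⟩⟩
    exacts [h₂, h₁]
  | trans h₁₂ _ ih₁₂ ih₂₃ =>
    exact (ih₁₂ hL pre).trans (ih₂₃ (fun δ hδ => hL δ (h₁₂.mem_iff.2 hδ)) pre)

theorem mem_applySeq_emptyDb_iff {L : List (Modification ρ ar D)} (hL : ∀ δ ∈ L, δ.IsIns)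
    {R : ρ} {a : Fin (ar R) → D} : a ∈ applySeq L emptyDb R ↔ .ins R a ∈ L := by
  induction L using List.reverseRecOn with
  | nil => simp [applySeq, emptyDb]
  | append_singleton L δ ih =>
    have hδ := hL δ (by simp)
    obtain ⟨S, b⟩ | ⟨S, b⟩ := δ
    · rw [applySeq_append, applySeq_cons, applySeq_nil, mem_applyMod_ins,
        ih fun δ hδ => hL δ (by simp [hδ])]
      simp
    · exact hδ.elim

theorem perm_of_applySeq_eq {L L' : List (Modification ρ ar D)}
    (hL : ∀ δ ∈ L, δ.IsIns) (hL' : ∀ δ ∈ L', δ.IsIns) (hnd : L.Nodup) (hnd' : L'.Nodup)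
    (h : applySeq L emptyDb = applySeq L' emptyDb) : L.Perm L' := by
  refine (List.perm_ext_iff_of_nodup hnd hnd').2 fun δ => ?_
  obtain ⟨R, a⟩ | ⟨R, a⟩ := δ
  · rw [← mem_applySeq_emptyDb_iff hL, ← mem_applySeq_emptyDb_iff hL', h]
  · exact iff_of_false (hL _) (hL' _)

theorem reflTransGen_cancel_ins_del {L₁ L₂ : List (Modification ρ ar D)} {R : ρ}
    {a : Fin (ar R) → D} (hL : ∀ δ ∈ L₁ ++ L₂, δ.IsIns)
    (hnd : (L₁ ++ .ins R a :: L₂).Nodup) :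
    Relation.ReflTransGen InnStep (L₁ ++ .ins R a :: L₂ ++ [.del R a]) (L₁ ++ L₂) := by
  rw [List.nodup_middle, List.nodup_cons] at hnd
  have hmove : Relation.ReflTransGen InnStep (L₁ ++ .ins R a :: L₂) (L₁ ++ L₂ ++ [.ins R a]) :=
    reflTransGen_of_perm
      (fun δ hδ => List.forall_mem_cons.2 ⟨trivial, hL⟩ δ (List.perm_middle.mem_iff.1 hδ))
      (List.perm_middle.trans (List.perm_append_comm (l₁ := [_]))) []
  have hcancel : InnStep (L₁ ++ L₂ ++ [.ins R a] ++ [.del R a]) (L₁ ++ L₂) := by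
    simpa using InnStep.removePair (L₁ ++ L₂) [] R a
      ((mem_applySeq_emptyDb_iff hL).not.2 hnd.1)
  exact (reflTransGen_append_right hmove [.del R a]).tail hcancel

theorem exists_reflTransGen_insOnly_nodup_of_append_singleton {L : List (Modification ρ ar D)}
    (hL : ∀ δ ∈ L, δ.IsIns) (hnd : L.Nodup) (δ : Modification ρ ar D) :
    ∃ L', (∀ δ ∈ L', δ.IsIns) ∧ L'.Nodup ∧ Relation.ReflTransGen InnStep (L ++ [δ]) L' := by
  obtain ⟨R, a⟩ | ⟨R, a⟩ := δ
  · by_cases ha : a ∈ applySeq L emptyDb R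
    · exact ⟨L, hL, hnd, .single (by simpa using InnStep.removeNoopIns L [] R a ha)⟩
    · rw [mem_applySeq_emptyDb_iff hL] at ha
      refine ⟨L ++ [.ins R a], ?_, ?_, .refl⟩
      · exact List.forall_mem_append.2 ⟨hL, List.forall_mem_singleton.2 trivial⟩
      · simpa using hnd.concat ha
  · by_cases ha : a ∈ applySeq L emptyDb R
    · obtain ⟨L₁, L₂, rfl⟩ := List.append_of_mem ((mem_applySeq_emptyDb_iff hL).1 ha)
      have hL₁₂ : ∀ δ ∈ L₁ ++ L₂, δ.IsIns := fun δ hδ =>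
        hL δ (List.perm_middle.mem_iff.2 (.tail _ hδ))
      exact ⟨L₁ ++ L₂, hL₁₂, (List.nodup_middle.1 hnd).of_cons,
        reflTransGen_cancel_ins_del hL₁₂ hnd⟩
    · exact ⟨L, hL, hnd, .single (by simpa using InnStep.removeNoopDel L [] R a ha)⟩

theorem exists_reflTransGen_insOnly_nodup (α : List (Modification ρ ar D)) :
    ∃ L, (∀ δ ∈ L, δ.IsIns) ∧ L.Nodup ∧ Relation.ReflTransGen InnStep α L := by
  induction α using List.reverseRecOn with
  | nil => exact ⟨[], by simp, List.nodup_nil, .refl⟩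
  | append_singleton β δ ih =>
    obtain ⟨L, hL, hnd, hβL⟩ := ih
    obtain ⟨L', hL', hnd', hLL'⟩ := exists_reflTransGen_insOnly_nodup_of_append_singleton hL hnd δ
    exact ⟨L', hL', hnd', (reflTransGen_append_right hβL [δ]).trans hLL'⟩

end

/-- Each innocuous transformation preserves the database obtained from the
empty database, and any two modification sequences yielding the same database
from the empty database are connected by a finite sequence of innocuous
transformations. -/
theorem innocuous_connects {ρ : Type*} [DecidableEq ρ] {ar : ρ → ℕ}
    {D : Type*} :
    (∀ α α' : List (Modification ρ ar D), InnStep α α' →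
      applySeq α emptyDb = applySeq α' emptyDb) ∧
    (∀ α α' : List (Modification ρ ar D),
      applySeq α emptyDb = applySeq α' emptyDb →
      Relation.ReflTransGen InnStep α α') := by
  refine ⟨fun _ _ => InnStep.applySeq_eq, fun α α' h => ?_⟩
  obtain ⟨L, hL, hnd, hαL⟩ := exists_reflTransGen_insOnly_nodup α
  obtain ⟨L', hL', hnd', hα'L'⟩ := exists_reflTransGen_insOnly_nodup α'
  have hdb : applySeq L emptyDb = applySeq L' emptyDb :=
    (applySeq_eq_of_reflTransGen hαL).symm.trans (h.trans (applySeq_eq_of_reflTransGen hα'L'))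
  have hperm : L.Perm L' := perm_of_applySeq_eq hL hL' hnd hnd' hdb
  have hLL' : Relation.ReflTransGen InnStep L L' := by
    simpa using reflTransGen_of_perm hL hperm []
  exact hαL.trans (hLL'.trans (Std.Symm.symm _ _ hα'L'))
end
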